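/- Let n be a natural number and let i be a natural number with i ≤ n, and set j := n - i. Then ((-n)_i / i!) · (-i)_{n-i} = (-1)^n · (2^{2j} / j!) · (-n/2)_j · ((1-n)/2)_j, as an identity of real numbers. -/

import Mathlib

/-- The Pochhammer symbol (rising factorial) `(x)_n = x(x+1)⋯(x+n-1)` for real `x`. -/
noncomputable def poch (x : ℝ) (n : ℕ) : ℝ := (ascPochhammer ℝ n).eval x

/-!
Write `n↓k = n(n-1)⋯(n-k+1)` for the falling factorial. On the left, `(-n)_i = (-1)^i n↓i` and
`(-i)_j = (-1)^j i↓j`; on the right, the duplication formula `(x)_{2j} = 4^j (x/2)_j ((x+1)/2)_j`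
at `x = -n` merges the two half-integer Pochhammer symbols into `(-n)_{2j} = n↓2j`. What remains
is `n↓i · i↓j · j! = n↓2j · i!` for `i + j = n`: both sides equal `n! i! / (i - j)!`, and both
vanish when `i < j`.
-/

open Nat

theorem Nat.descFactorial_mul_descFactorial_mul_factorial {n i j : ℕ} (h : i + j = n) :
    n.descFactorial i * i.descFactorial j * j ! = n.descFactorial (2 * j) * i ! := by
  subst h
  rcases le_or_gt j i with hji | hij
  · have hi : j ! * (i + j).descFactorial i = (i + j)! := by
      simpa using factorial_mul_descFactorial (n := i + j) (k := i) (by omega)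
    have hj : (i - j)! * i.descFactorial j = i ! := factorial_mul_descFactorial hji
    have h2j : (i - j)! * (i + j).descFactorial (2 * j) = (i + j)! := by
      have := factorial_mul_descFactorial (n := i + j) (k := 2 * j) (by omega)
      rwa [show i + j - 2 * j = i - j by omega] at this
    apply Nat.eq_of_mul_eq_mul_left (factorial_pos (i - j))
    calc (i - j)! * ((i + j).descFactorial i * i.descFactorial j * j !)
        = (j ! * (i + j).descFactorial i) * ((i - j)! * i.descFactorial j) := by ring
      _ = (i + j)! * i ! := by rw [hi, hj]
      _ = (i - j)! * ((i + j).descFactorial (2 * j) * i !) := by rw [← h2j]; ring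
  · rw [descFactorial_eq_zero_iff_lt.mpr hij,
      descFactorial_eq_zero_iff_lt.mpr (show i + j < 2 * j by omega)]
    simp

theorem ascPochhammer_eval_two_mul {K : Type*} [Field K] [NeZero (2 : K)] (x : K) (j : ℕ) :
    (ascPochhammer K (2 * j)).eval x =
      4 ^ j * (ascPochhammer K j).eval (x / 2) * (ascPochhammer K j).eval ((x + 1) / 2) := by
  induction j with
  | zero => simp
  | succ j ih =>
    rw [show 2 * (j + 1) = 2 * j + 1 + 1 by ring, ascPochhammer_succ_eval,
      ascPochhammer_succ_eval, ascPochhammer_succ_eval, ascPochhammer_succ_eval, ih]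
    field_simp
    push_cast
    ring

theorem poch_neg_natCast (n k : ℕ) : poch (-n) k = (-1) ^ k * n.descFactorial k := by
  rw [poch, ascPochhammer_eval_neg_eq_descPochhammer, descPochhammer_eval_eq_descFactorial]

theorem stmt_4 (n i : ℕ) (hin : i ≤ n) (j : ℕ) (hj : j = n - i) :
    (poch (-(n : ℝ)) i / (Nat.factorial i : ℝ)) * poch (-(i : ℝ)) (n - i) =
      (-1 : ℝ) ^ n * ((2 : ℝ) ^ (2 * j) / (Nat.factorial j : ℝ)) *
        poch (-(n : ℝ) / 2) j * poch ((1 - (n : ℝ)) / 2) j := by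
  have hij : i + j = n := by omega
  have hdup : poch (-(n : ℝ) / 2) j * poch ((1 - (n : ℝ)) / 2) j =
      n.descFactorial (2 * j) / 4 ^ j := by
    have := ascPochhammer_eval_two_mul (-(n : ℝ)) j
    rw [← poch, poch_neg_natCast, pow_mul, neg_one_sq, one_pow, one_mul, neg_add_eq_sub] at this
    rw [this, poch, poch]
    field_simp
  have hfalling : ((n.descFactorial i * i.descFactorial j * j ! : ℕ) : ℝ) =
      (n.descFactorial (2 * j) * i ! : ℕ) :=
    congrArg _ (Nat.descFactorial_mul_descFactorial_mul_factorial hij)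
  have hsign : (-1 : ℝ) ^ i * (-1) ^ j = (-1) ^ n := by rw [← pow_add, hij]
  rw [← hj, mul_assoc _ (poch _ j), hdup, poch_neg_natCast, poch_neg_natCast, pow_mul,
    show (2 : ℝ) ^ 2 = 4 by norm_num, ← hsign]
  push_cast at hfalling
  field_simp
  linear_combination hfalling
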